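/- arXiv:1811.11000 — 4 statements merged into one kernel-verified Lean document; each statement's English description precedes it below -/
import Mathlib

section
/- The set {f ∈ l∞(ℕ) : AE(f) = +∞} of bounded arithmetic functions with infinite anqie entropy is dense in l∞(ℕ) with respect to the supremum norm. -/
open Filter Set Topology

namespace Anqie

variable {X : Type*} [TopologicalSpace X]

/-- `𝒰` is an open cover of `X`. -/
def IsOpenCover (𝒰 : Set (Set X)) : Prop :=
  (∀ U ∈ 𝒰, IsOpen U) ∧ ⋃₀ 𝒰 = Set.univ

/-- The common refinement `𝒰 ∨ T⁻¹ 𝒰 ∨ ⋯ ∨ T^{-(n-1)} 𝒰`. -/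
def iterJoin (T : X → X) (𝒰 : Set (Set X)) (n : ℕ) : Set (Set X) :=
  {V | ∃ u : Fin n → Set X, (∀ j, u j ∈ 𝒰) ∧ V = ⋂ j : Fin n, T^[(j : ℕ)] ⁻¹' u j}

/-- The minimal cardinality of a finite subcover of `𝒱` (junk value `0` if none exists). -/
noncomputable def coverNum (𝒱 : Set (Set X)) : ℕ :=
  sInf {k | ∃ F : Finset (Set X), (↑F : Set (Set X)) ⊆ 𝒱 ∧
    ⋃₀ (↑F : Set (Set X)) = Set.univ ∧ F.card = k}

/-- The Adler–Konheim–McAndrew entropy of `T` relative to the open cover `𝒰`. -/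
noncomputable def coverEntropy (T : X → X) (𝒰 : Set (Set X)) : EReal :=
  Filter.atTop.limsup fun n : ℕ =>
    ((Real.log (coverNum (iterJoin T 𝒰 n)) / n : ℝ) : EReal)

/-- The Adler–Konheim–McAndrew topological entropy of `T`, via open covers. -/
noncomputable def entropy (T : X → X) : EReal :=
  ⨆ 𝒰 ∈ {𝒰 : Set (Set X) | IsOpenCover 𝒰}, coverEntropy T 𝒰

/-- The set of forward-orbit sequences of `f : ℕ → X` inside `X^ℕ`. -/
def orbitSet (f : ℕ → X) : Set (ℕ → X) :=
  {ω | ∃ n : ℕ, ∀ k : ℕ, ω k = f (n + k)}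

/-- `X_f`, the closure of the set of orbit sequences in the product topology. -/
def orbitClosure (f : ℕ → X) : Set (ℕ → X) := closure (orbitSet f)

lemma shift_mem_orbitClosure (f : ℕ → X) {ω : ℕ → X} (hω : ω ∈ orbitClosure f) :
    (fun k => ω (k + 1)) ∈ orbitClosure f := by
  have hcont : Continuous fun ω : ℕ → X => fun k => ω (k + 1) :=
    continuous_pi fun k => continuous_apply (k + 1)
  have hmaps : MapsTo (fun ω : ℕ → X => fun k => ω (k + 1)) (orbitSet f) (orbitSet f) := by
    rintro ω ⟨n, hn⟩
    refine ⟨n + 1, fun k => ?_⟩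
    show ω (k + 1) = f (n + 1 + k)
    rw [hn (k + 1)]; congr 1; omega
  exact map_mem_closure hcont hω hmaps

/-- `B_f`, the left shift restricted to `X_f`. -/
def shiftOn (f : ℕ → X) : orbitClosure f → orbitClosure f :=
  fun ω => ⟨fun k => (ω : ℕ → X) (k + 1), shift_mem_orbitClosure f ω.2⟩

/-- The anqie entropy of a map `f : ℕ → X`: the AKM topological entropy of the
left shift on `X_f`. -/
noncomputable def AE (f : ℕ → X) : EReal := entropy (shiftOn f)

end Anqie

/-!
Snap the real part of `f` down to the lattice `e ℤ` and add `e / (s n + 2)`, where `s` is a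
disjunctive sequence (every finite word over `ℕ` occurs in it). This moves `f` by at most `e`, and
the real part modulo `e` of the zeroth coordinate, a continuous function on `X_g`, reads off `s`.
Hence for every `m` the level sets of this function at the `m` values `e / (k + 2)` are pairwise
disjoint closed subsets of `X_g`, and the shift follows every one of the `m ^ n` itineraries of
length `n` through them. In the open cover of `X_g` by the complements of all but one of these sets,
each member of the `n`-fold join meets at most one itinerary, so every subcover has at least `m ^ n`
members and `AE g ≥ log m`.
-/

open Function
open scoped BoundedContinuousFunction

theorem EReal.eq_top_of_forall_log_natCast_le {x : EReal}
    (h : ∀ m : ℕ, 0 < m → (Real.log m : EReal) ≤ x) : x = ⊤ := by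
  refine (EReal.eq_top_iff_forall_lt x).2 fun y => ?_
  obtain ⟨m, hm, hy⟩ := ((eventually_gt_atTop 0).and
    ((Real.tendsto_log_atTop.comp tendsto_natCast_atTop_atTop).eventually_gt_atTop y)).exists
  exact (EReal.coe_lt_coe_iff.2 hy).trans_le (h m hm)

namespace Anqie

section CoverEntropy

variable {X ι : Type*} {T : X → X} {𝒰 : Set (Set X)} {A : ι → Set X}

def Separates (𝒰 : Set (Set X)) (A : ι → Set X) : Prop :=
  ∀ U ∈ 𝒰, ∀ i i', (U ∩ A i).Nonempty → (U ∩ A i').Nonempty → i = i'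

theorem finite_iterJoin (h𝒰 : 𝒰.Finite) (n : ℕ) : (iterJoin T 𝒰 n).Finite := by
  have : Finite 𝒰 := h𝒰.to_subtype
  refine (Set.finite_range fun u : Fin n → 𝒰 => ⋂ j : Fin n, T^[j] ⁻¹' u j).subset ?_
  rintro V ⟨u, hu, rfl⟩
  exact ⟨fun j => ⟨u j, hu j⟩, rfl⟩

theorem sUnion_iterJoin (h𝒰 : ⋃₀ 𝒰 = univ) (n : ℕ) : ⋃₀ iterJoin T 𝒰 n = univ := by
  refine eq_univ_of_forall fun x => ?_
  have hx : ∀ j : Fin n, ∃ U ∈ 𝒰, T^[j] x ∈ U := fun j =>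
    mem_sUnion.1 (h𝒰 ▸ mem_univ (T^[j] x))
  choose u hu hxu using hx
  exact ⟨_, ⟨u, hu, rfl⟩, mem_iInter.2 hxu⟩

theorem eq_of_mem_iterJoin
    (hsep : Separates 𝒰 A)
    {n : ℕ} {V : Set X} (hV : V ∈ iterJoin T 𝒰 n) {x y : X} (hx : x ∈ V) (hy : y ∈ V)
    {w w' : Fin n → ι} (hxw : ∀ j : Fin n, T^[j] x ∈ A (w j))
    (hyw : ∀ j : Fin n, T^[j] y ∈ A (w' j)) : w = w' := by
  obtain ⟨u, hu, rfl⟩ := hV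
  funext j
  exact hsep _ (hu j) _ _ ⟨_, mem_iInter.1 hx j, hxw j⟩ ⟨_, mem_iInter.1 hy j, hyw j⟩

theorem card_pow_le_card_of_subcover [Fintype ι]
    (hsep : Separates 𝒰 A)
    {n : ℕ} (hw : ∀ w : Fin n → ι, ∃ x, ∀ j : Fin n, T^[j] x ∈ A (w j))
    {F : Finset (Set X)} (hF : ↑F ⊆ iterJoin T 𝒰 n) (hcov : ⋃₀ (F : Set (Set X)) = univ) :
    Fintype.card ι ^ n ≤ F.card := by
  choose x hx using hw
  have hV : ∀ w, ∃ V ∈ F, x w ∈ V := fun w =>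
    mem_sUnion.1 (hcov ▸ mem_univ (x w))
  choose V hVF hxV using hV
  calc Fintype.card ι ^ n = Fintype.card (Fin n → ι) := by simp
    _ ≤ F.card := Finset.card_le_card_of_injOn V (fun w _ => hVF w) fun w _ w' _ h =>
        eq_of_mem_iterJoin hsep (hF (hVF w)) (hxV w) (h ▸ hxV w') (hx w) (hx w')

theorem card_pow_le_coverNum_iterJoin [Fintype ι] (h𝒰 : 𝒰.Finite) (hcov : ⋃₀ 𝒰 = univ)
    (hsep : Separates 𝒰 A)
    {n : ℕ} (hw : ∀ w : Fin n → ι, ∃ x, ∀ j : Fin n, T^[j] x ∈ A (w j)) :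
    Fintype.card ι ^ n ≤ coverNum (iterJoin T 𝒰 n) := by
  have hfin := finite_iterJoin (T := T) h𝒰 n
  refine le_csInf ⟨_, hfin.toFinset, by simp, by simpa using sUnion_iterJoin hcov n, rfl⟩ ?_
  rintro _ ⟨F, hF, hFcov, rfl⟩
  exact card_pow_le_card_of_subcover hsep hw hF hFcov

theorem log_le_coverEntropy {m : ℕ} (h : ∀ n, m ^ n ≤ coverNum (iterJoin T 𝒰 n)) :
    (Real.log m : EReal) ≤ coverEntropy T 𝒰 := by
  refine le_limsup_of_frequently_le (Eventually.frequently ?_)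
    (isBoundedUnder_of ⟨⊤, fun _ => le_top⟩)
  filter_upwards [eventually_gt_atTop 0] with n hn
  rw [EReal.coe_le_coe_iff, le_div_iff₀ (by exact_mod_cast hn), mul_comm, ← Real.log_pow]
  have hN : ((m ^ n : ℕ) : ℝ) ≤ coverNum (iterJoin T 𝒰 n) := by exact_mod_cast h n
  rcases m.eq_zero_or_pos with rfl | hm
  · simpa [zero_pow hn.ne'] using Real.log_natCast_nonneg _
  · exact_mod_cast Real.log_le_log (by positivity) hN

end CoverEntropy

theorem log_card_le_entropy {X ι : Type*} [TopologicalSpace X] [Fintype ι] [Nonempty ι]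
    {T : X → X} {A : ι → Set X} (hA : ∀ i, IsClosed (A i)) (hdisj : Pairwise (Disjoint on A))
    (hw : ∀ n (w : Fin n → ι), ∃ x, ∀ j : Fin n, T^[j] x ∈ A (w j)) :
    (Real.log (Fintype.card ι) : EReal) ≤ entropy T := by
  let U : ι → Set X := fun i => (⋃ (j) (_ : j ≠ i), A j)ᶜ
  have hsep : ∀ i j, (U i ∩ A j).Nonempty → j = i := by
    rintro i j ⟨x, hxU, hxA⟩
    by_contra hji
    exact hxU (mem_iUnion₂.2 ⟨j, hji, hxA⟩)
  have hcover : IsOpenCover (range U) := by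
    refine ⟨?_, ?_⟩
    · rintro _ ⟨i, rfl⟩
      exact (isClosed_iUnion_of_finite fun j =>
        isClosed_iUnion_of_finite fun _ => hA j).isOpen_compl
    · refine sUnion_range U ▸ eq_univ_of_forall fun x => mem_iUnion.2 ?_
      by_cases hx : ∃ i, x ∈ A i
      · obtain ⟨i, hi⟩ := hx
        exact ⟨i, by simpa [U] using fun j hj hxj => (hdisj hj).ne_of_mem hxj hi rfl⟩
      · exact ⟨Classical.arbitrary ι, by simpa [U] using fun j _ => not_exists.1 hx j⟩
  have hsep' : Separates (range U) A := by
    rintro _ ⟨i, rfl⟩ j j' hj hj'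
    exact (hsep i j hj).trans (hsep i j' hj').symm
  calc (Real.log (Fintype.card ι) : EReal)
      ≤ coverEntropy T (range U) := log_le_coverEntropy fun n =>
        card_pow_le_coverNum_iterJoin (finite_range U) hcover.2 hsep' (hw n)
    _ ≤ entropy T := le_iSup₂ (f := fun 𝒰 _ => coverEntropy T 𝒰) (range U) hcover

def IsDisjunctive {α : Type*} (s : ℕ → α) : Prop :=
  ∀ n (w : Fin n → α), ∃ p, ∀ j : Fin n, s (p + j) = w j

/-- Block `i` occupies `[i², (i + 1)²)` and spells out the list with code `i.unpair.1`; the list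
`l` appears in block `pair (encode l) l.length`, which is long enough to hold it. -/
def disjunctiveSeq (n : ℕ) : ℕ :=
  (Denumerable.ofNat (List ℕ) (Nat.sqrt n).unpair.1).getD (n - Nat.sqrt n * Nat.sqrt n) 0

theorem isDisjunctive_disjunctiveSeq : IsDisjunctive disjunctiveSeq := by
  intro n w
  set i := Nat.pair (Encodable.encode (List.ofFn w)) n
  refine ⟨i * i, fun j => ?_⟩
  have hj : (j : ℕ) ≤ i + i := j.2.le.trans ((Nat.right_le_pair _ _).trans (Nat.le_add_left _ _))
  simp [disjunctiveSeq, Nat.sqrt_add_eq i hj, i]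

section Orbit

variable {X : Type*} [TopologicalSpace X] (f : ℕ → X)

def orbitPoint (p : ℕ) : orbitClosure f :=
  ⟨fun k => f (p + k), subset_closure ⟨p, fun _ => rfl⟩⟩

theorem shiftOn_orbitPoint (p : ℕ) : shiftOn f (orbitPoint f p) = orbitPoint f (p + 1) :=
  Subtype.ext <| funext fun k => congrArg f (by omega)

theorem iterate_shiftOn_orbitPoint (p j : ℕ) :
    (shiftOn f)^[j] (orbitPoint f p) = orbitPoint f (p + j) := by
  induction j with
  | zero => rfl
  | succ j ih => rw [iterate_succ_apply', ih, shiftOn_orbitPoint]; rfl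

end Orbit

theorem AE_eq_top_of_comp_eq_comp {X Y : Type*} [TopologicalSpace X] [TopologicalSpace Y]
    [T1Space Y] {f : ℕ → X} {Φ : X → Y} (hΦ : Continuous Φ) {c : ℕ → Y} (hc : Injective c)
    {s : ℕ → ℕ} (hs : IsDisjunctive s) (hf : Φ ∘ f = c ∘ s) : AE f = ⊤ := by
  refine EReal.eq_top_of_forall_log_natCast_le fun m hm => ?_
  have : Nonempty (Fin m) := Fin.pos_iff_nonempty.1 hm
  let A : Fin m → Set (orbitClosure f) := fun i => {ω | Φ ((ω : ℕ → X) 0) = c i}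
  have hA : ∀ i, IsClosed (A i) := fun i => isClosed_singleton.preimage <|
    hΦ.comp ((continuous_apply 0).comp continuous_subtype_val)
  have hdisj : Pairwise (Disjoint on A) := fun i i' hii' =>
    disjoint_left.2 fun ω hi hi' => hii' (Fin.val_injective (hc (hi.symm.trans hi')))
  have hw : ∀ n (w : Fin n → Fin m), ∃ ω, ∀ j : Fin n, (shiftOn f)^[j] ω ∈ A (w j) := by
    intro n w
    obtain ⟨p, hp⟩ := hs n fun j => w j
    refine ⟨orbitPoint f p, fun j => ?_⟩
    rw [iterate_shiftOn_orbitPoint]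
    show Φ (f (p + j)) = c (w j)
    rw [← hp j]
    exact congrFun hf (p + j)
  simpa [AE] using log_card_le_entropy hA hdisj hw

theorem abs_mul_inv_add_two_sub_fract_le (e x : ℝ) (k : ℕ) :
    |e * ((k + 2 : ℝ)⁻¹ - Int.fract x)| ≤ |e| := by
  rw [abs_mul]
  refine mul_le_of_le_one_right (abs_nonneg e) (abs_sub_le_of_nonneg_of_le (by positivity) ?_
    (Int.fract_nonneg x) (Int.fract_lt_one x).le)
  exact inv_le_one_of_one_le₀ (by linarith [(Nat.cast_nonneg k : (0 : ℝ) ≤ k)])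

/-- Moves the real part of `f n` down to `e ℤ` and then up by `e / (s n + 2)`, so that the real
part modulo `e` records `s n`. -/
noncomputable def perturbation (e : ℝ) (s : ℕ → ℕ) (f : ℕ → ℂ) : ℕ →ᵇ ℂ :=
  .ofNormedAddCommGroupDiscrete
    (fun n => ((e * ((s n + 2 : ℝ)⁻¹ - Int.fract ((f n).re / e)) : ℝ) : ℂ)) |e| fun n => by
      rw [Complex.norm_real, Real.norm_eq_abs]
      exact abs_mul_inv_add_two_sub_fract_le _ _ _

theorem perturbation_apply (e : ℝ) (s : ℕ → ℕ) (f : ℕ → ℂ) (n : ℕ) :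
    perturbation e s f n = ((e * ((s n + 2 : ℝ)⁻¹ - Int.fract ((f n).re / e)) : ℝ) : ℂ) :=
  rfl

theorem norm_perturbation_le (e : ℝ) (s : ℕ → ℕ) (f : ℕ → ℂ) : ‖perturbation e s f‖ ≤ |e| :=
  (BoundedContinuousFunction.norm_le (abs_nonneg e)).2 fun n => by
    rw [perturbation_apply, Complex.norm_real, Real.norm_eq_abs]
    exact abs_mul_inv_add_two_sub_fract_le _ _ _

theorem coe_re_add_perturbation {e : ℝ} (he : e ≠ 0) (s : ℕ → ℕ) (f : ℕ → ℂ) (n : ℕ) :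
    (((f n + perturbation e s f n).re : ℝ) : AddCircle e) =
      ((e * (s n + 2 : ℝ)⁻¹ : ℝ) : AddCircle e) := by
  refine QuotientAddGroup.eq_iff_sub_mem.2 ?_
  convert AddSubgroup.zsmul_mem_zmultiples e ⌊(f n).re / e⌋ using 1
  rw [perturbation_apply, Complex.add_re, Complex.ofReal_re, Int.fract, zsmul_eq_mul]
  field_simp
  ring

theorem AE_add_perturbation_eq_top {e : ℝ} (he : 0 < e) (f : ℕ → ℂ) :
    AE (f + ⇑(perturbation e disjunctiveSeq f)) = ⊤ := by
  have : Fact (0 < e) := ⟨he⟩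
  have hmem : ∀ k : ℕ, e * (k + 2 : ℝ)⁻¹ ∈ Ico 0 (0 + e) := fun k => by
    refine ⟨by positivity, ?_⟩
    rw [zero_add, mul_inv_lt_iff₀ (by positivity)]
    nlinarith [(Nat.cast_nonneg k : (0 : ℝ) ≤ k)]
  refine AE_eq_top_of_comp_eq_comp (Φ := fun z : ℂ => (z.re : AddCircle e))
    (c := fun k : ℕ => ((e * (k + 2 : ℝ)⁻¹ : ℝ) : AddCircle e))
    (continuous_quotient_mk'.comp Complex.continuous_re) (fun k k' h => ?_)
    isDisjunctive_disjunctiveSeq (funext fun n => coe_re_add_perturbation he.ne' _ f n)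
  simpa [he.ne'] using (AddCircle.coe_eq_coe_iff_of_mem_Ico (hmem k) (hmem k')).1 h

end Anqie

/-- The set of bounded arithmetic functions with infinite anqie
entropy is dense in `l∞(ℕ)` (bounded functions `ℕ → ℂ` with the sup norm). -/
theorem dense_infinite_anqie_entropy :
    Dense {f : BoundedContinuousFunction ℕ ℂ | Anqie.AE ⇑f = ⊤} := by
  refine Metric.dense_iff.2 fun F r hr =>
    ⟨F + Anqie.perturbation (r / 2) Anqie.disjunctiveSeq F, ?_, ?_⟩
  · rw [Metric.mem_ball, dist_self_add_left]
    calc _ ≤ |r / 2| := Anqie.norm_perturbation_le _ _ _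
      _ < r := by rw [abs_of_pos (half_pos hr)]; exact half_lt_self hr
  · exact Anqie.AE_add_perturbation_eq_top (half_pos hr) F
end

section
/- The anqie entropy is lower semi-continuous on l∞(ℕ): if (f_k)_{k ∈ ℕ} is a sequence of bounded functions ℕ → ℂ converging to a bounded function f in the supremum norm (i.e., ‖f_k − f‖_∞ → 0), then AE(f) ≤ liminf_{k → ∞} AE(f_k). -/
open Filter Set Topology

namespace AnqieAux
open Anqie

def orb (f : ℕ → ℂ) (n : ℕ) : ℕ → ℂ := fun k => f (n + k)

lemma orb_mem_closure (f : ℕ → ℂ) (n : ℕ) : orb f n ∈ orbitClosure f :=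
  subset_closure ⟨n, fun _ => rfl⟩

instance (f : ℕ → ℂ) : Nonempty ↥(orbitClosure f) := ⟨⟨orb f 0, orb_mem_closure f 0⟩⟩

lemma orbitClosure_subset_pi {f : ℕ → ℂ} {M : ℝ} (hM : ∀ n, ‖f n‖ ≤ M) :
    orbitClosure f ⊆ Set.univ.pi fun _ : ℕ => Metric.closedBall (0 : ℂ) M := by
  apply closure_minimal
  · rintro ω ⟨n, hn⟩ i _
    simp only [Metric.mem_closedBall, dist_zero_right, hn i]
    exact hM _
  · exact isClosed_set_pi fun i _ => Metric.isClosed_closedBall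

lemma isCompact_orbitClosure {f : ℕ → ℂ} (hf : ∃ M : ℝ, ∀ n, ‖f n‖ ≤ M) :
    IsCompact (orbitClosure f) := by
  obtain ⟨M, hM⟩ := hf
  exact (isCompact_univ_pi fun _ => isCompact_closedBall 0 M).of_isClosed_subset
    isClosed_closure (orbitClosure_subset_pi hM)

lemma compactSpace_orbitClosure {f : ℕ → ℂ} (hf : ∃ M : ℝ, ∀ n, ‖f n‖ ≤ M) :
    CompactSpace ↥(orbitClosure f) :=
  isCompact_iff_compactSpace.mp (isCompact_orbitClosure hf)

lemma continuous_shiftOn (f : ℕ → ℂ) : Continuous (shiftOn f) := by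
  apply Continuous.subtype_mk
  exact continuous_pi fun k => (continuous_apply (k + 1)).comp continuous_subtype_val

lemma shiftOn_iterate_coe (f : ℕ → ℂ) (ω : ↥(orbitClosure f)) (j l : ℕ) :
    (((shiftOn f)^[j] ω : ℕ → ℂ)) l = (ω : ℕ → ℂ) (l + j) := by
  induction j generalizing ω with
  | zero => rfl
  | succ j ih =>
    rw [Function.iterate_succ_apply, ih (shiftOn f ω)]
    show (ω : ℕ → ℂ) ((l + j) + 1) = (ω : ℕ → ℂ) (l + (j + 1))
    congr 1

lemma isOpen_cyl (x : ℕ → ℂ) (m : ℕ) (r : ℝ) :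
    IsOpen {ζ : ℕ → ℂ | ∀ i < m, dist (ζ i) (x i) < r} := by
  have h : {ζ : ℕ → ℂ | ∀ i < m, dist (ζ i) (x i) < r}
      = ⋂ i ∈ Finset.range m, (fun ζ : ℕ → ℂ => ζ i) ⁻¹' Metric.ball (x i) r := by
    ext ζ; simp [Metric.mem_ball]
  rw [h]
  exact isOpen_biInter_finset fun i _ => Metric.isOpen_ball.preimage (continuous_apply i)

lemma isOpen_cyl' {K : Set (ℕ → ℂ)} (x : ℕ → ℂ) (m : ℕ) (r : ℝ) :
    IsOpen {ζ : ↥K | ∀ i < m, dist ((ζ : ℕ → ℂ) i) (x i) < r} :=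
  (isOpen_cyl x m r).preimage continuous_subtype_val


lemma exists_cylinder_subset {K : Set (ℕ → ℂ)} {U : Set ↥K} (hU : IsOpen U)
    {ω : ↥K} (hω : ω ∈ U) :
    ∃ (m : ℕ) (r : ℝ), 0 < r ∧
      {ω' : ↥K | ∀ j < m, dist ((ω' : ℕ → ℂ) j) ((ω : ℕ → ℂ) j) < r} ⊆ U := by
  obtain ⟨W, hW, rfl⟩ := isOpen_induced_iff.mp hU
  have hWn : W ∈ 𝓝 (ω : ℕ → ℂ) := hW.mem_nhds hω
  rw [nhds_pi, Filter.mem_pi] at hWn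
  obtain ⟨I, hIfin, t, ht, hsub⟩ := hWn
  have hr : ∀ i, ∃ r > 0, Metric.ball ((ω : ℕ → ℂ) i) r ⊆ t i :=
    fun i => Metric.mem_nhds_iff.mp (ht i)
  choose ρ hρ hball using hr
  obtain ⟨m, hm⟩ : ∃ m, ∀ i ∈ I, i < m := by
    obtain ⟨b, hb⟩ := hIfin.bddAbove
    exact ⟨b + 1, fun i hi => Nat.lt_succ_of_le (hb hi)⟩
  set J := hIfin.toFinset with hJ
  set r : ℝ := (insert (1 : ℝ) (J.image ρ)).min' (Finset.insert_nonempty _ _) with hrdef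
  have hrpos : 0 < r := by
    have := Finset.min'_mem (insert (1 : ℝ) (J.image ρ)) (Finset.insert_nonempty _ _)
    rw [← hrdef] at this
    rcases Finset.mem_insert.mp this with h1 | h2
    · rw [h1]; norm_num
    · obtain ⟨i, _, hi⟩ := Finset.mem_image.mp h2
      rw [← hi]; exact hρ i
  have hrle : ∀ i ∈ I, r ≤ ρ i := by
    intro i hi
    exact Finset.min'_le _ _ (Finset.mem_insert_of_mem
      (Finset.mem_image_of_mem ρ (hIfin.mem_toFinset.mpr hi)))
  refine ⟨m, r, hrpos, ?_⟩
  intro ω' h'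
  show (ω' : ℕ → ℂ) ∈ W
  apply hsub
  intro i hi
  apply hball i
  exact Metric.mem_ball.mpr (lt_of_lt_of_le (h' i (hm i hi)) (hrle i hi))

lemma lebesgue {f : ℕ → ℂ} (hf : ∃ M : ℝ, ∀ n, ‖f n‖ ≤ M)
    {𝒰 : Set (Set ↥(orbitClosure f))} (h𝒰 : IsOpenCover 𝒰) :
    ∃ (m : ℕ) (r : ℝ), 0 < r ∧ ∀ ω : ↥(orbitClosure f), ∃ U ∈ 𝒰,
      {ω' : ↥(orbitClosure f) | ∀ j < m, dist ((ω' : ℕ → ℂ) j) ((ω : ℕ → ℂ) j) < r} ⊆ U := by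
  haveI := compactSpace_orbitClosure hf
  have hpt : ∀ ω : ↥(orbitClosure f), ∃ (U : Set ↥(orbitClosure f)) (mm : ℕ) (rr : ℝ),
      U ∈ 𝒰 ∧ 0 < rr ∧
      {ω' : ↥(orbitClosure f) | ∀ j < mm, dist ((ω' : ℕ → ℂ) j) ((ω : ℕ → ℂ) j) < rr} ⊆ U := by
    intro ω
    have : (ω : ↥(orbitClosure f)) ∈ ⋃₀ 𝒰 := h𝒰.2 ▸ mem_univ ω
    obtain ⟨U, hU, hωU⟩ := this
    obtain ⟨mm, rr, hrr, hsub⟩ := exists_cylinder_subset (h𝒰.1 U hU) hωU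
    exact ⟨U, mm, rr, hU, hrr, hsub⟩
  choose U mm ρ hU hρ hsub using hpt
  have hcov : (univ : Set ↥(orbitClosure f)) ⊆
      ⋃ ω : ↥(orbitClosure f),
        {ω' : ↥(orbitClosure f) | ∀ j < mm ω, dist ((ω' : ℕ → ℂ) j) ((ω : ℕ → ℂ) j) < ρ ω / 2} := by
    intro ω _
    exact mem_iUnion.mpr ⟨ω, fun j _ => by simp [dist_self, half_pos (hρ ω)]⟩
  obtain ⟨T, hT⟩ := isCompact_univ.elim_finite_subcover
    (fun ω : ↥(orbitClosure f) => {ω' : ↥(orbitClosure f) |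
      ∀ j < mm ω, dist ((ω' : ℕ → ℂ) j) ((ω : ℕ → ℂ) j) < ρ ω / 2})
    (fun ω => isOpen_cyl' ((ω : ℕ → ℂ)) (mm ω) (ρ ω / 2)) hcov
  have hTne : T.Nonempty := by
    by_contra h
    rw [Finset.not_nonempty_iff_eq_empty] at h
    have := hT (mem_univ (Classical.arbitrary ↥(orbitClosure f)))
    simp [h] at this
  refine ⟨T.sup mm, T.inf' hTne (fun ω => ρ ω / 2), ?_, ?_⟩
  · rw [Finset.lt_inf'_iff]
    exact fun ω _ => half_pos (hρ ω)
  · intro ω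
    have := hT (mem_univ ω)
    rw [mem_iUnion₂] at this
    obtain ⟨ω₀, hω₀T, hmem⟩ := this
    refine ⟨U ω₀, hU ω₀, ?_⟩
    intro ω' h'
    apply hsub ω₀
    intro j hj
    have hjm : j < T.sup mm := lt_of_lt_of_le hj (Finset.le_sup hω₀T)
    have h1 : dist ((ω' : ℕ → ℂ) j) ((ω : ℕ → ℂ) j) < ρ ω₀ / 2 :=
      lt_of_lt_of_le (h' j hjm) (Finset.inf'_le _ hω₀T)
    have h2 : dist ((ω : ℕ → ℂ) j) ((ω₀ : ℕ → ℂ) j) < ρ ω₀ / 2 := hmem j hj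
    calc dist ((ω' : ℕ → ℂ) j) ((ω₀ : ℕ → ℂ) j)
        ≤ dist ((ω' : ℕ → ℂ) j) ((ω : ℕ → ℂ) j) + dist ((ω : ℕ → ℂ) j) ((ω₀ : ℕ → ℂ) j) :=
          dist_triangle _ _ _
      _ < ρ ω₀ / 2 + ρ ω₀ / 2 := add_lt_add h1 h2
      _ = ρ ω₀ := by ring


lemma close_orbitClosure {f g : ℕ → ℂ} (hf : ∃ M : ℝ, ∀ n, ‖f n‖ ≤ M) {ε : ℝ}
    (hclose : ∀ n, dist (g n) (f n) ≤ ε) :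
    ∀ η ∈ orbitClosure g, ∃ ω ∈ orbitClosure f, ∀ j, dist (η j) (ω j) ≤ ε := by
  obtain ⟨M, hM⟩ := hf
  set D : Set ((ℕ → ℂ) × (ℕ → ℂ)) :=
    {p | p.1 ∈ orbitClosure f ∧ ∀ j, dist (p.2 j) (p.1 j) ≤ ε} with hD
  have hDclosed : IsClosed D := by
    apply IsClosed.inter
    · exact isClosed_closure.preimage continuous_fst
    · have h : {p : (ℕ → ℂ) × (ℕ → ℂ) | ∀ j, dist (p.2 j) (p.1 j) ≤ ε}
          = ⋂ j, {p : (ℕ → ℂ) × (ℕ → ℂ) | dist (p.2 j) (p.1 j) ≤ ε} := by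
        ext p; simp
      show IsClosed {p : (ℕ → ℂ) × (ℕ → ℂ) | ∀ j, dist (p.2 j) (p.1 j) ≤ ε}
      rw [h]
      exact isClosed_iInter fun j => isClosed_le
        (Continuous.dist ((continuous_apply j).comp continuous_snd)
          ((continuous_apply j).comp continuous_fst)) continuous_const
  have hDsub : D ⊆ (Set.univ.pi fun _ : ℕ => Metric.closedBall (0 : ℂ) M) ×ˢ
      (Set.univ.pi fun _ : ℕ => Metric.closedBall (0 : ℂ) (M + ε)) := by
    rintro ⟨ω, η⟩ ⟨h1, h2⟩
    have hω := orbitClosure_subset_pi hM h1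
    refine ⟨hω, fun j _ => ?_⟩
    have hωj : dist (ω j) (0 : ℂ) ≤ M := hω j (mem_univ j)
    have : dist (η j) (0 : ℂ) ≤ dist (η j) (ω j) + dist (ω j) (0 : ℂ) := dist_triangle _ _ _
    simp only [Metric.mem_closedBall]
    calc dist (η j) (0 : ℂ) ≤ dist (η j) (ω j) + dist (ω j) (0 : ℂ) := dist_triangle _ _ _
      _ ≤ ε + M := add_le_add (h2 j) hωj
      _ = M + ε := by ring
  have hDcomp : IsCompact D :=
    ((isCompact_univ_pi fun _ => isCompact_closedBall 0 M).prod
      (isCompact_univ_pi fun _ => isCompact_closedBall 0 (M + ε))).of_isClosed_subset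
      hDclosed hDsub
  have hclosed : IsClosed (Prod.snd '' D) := (hDcomp.image continuous_snd).isClosed
  have hsub2 : orbitClosure g ⊆ Prod.snd '' D := by
    apply closure_minimal _ hclosed
    rintro η ⟨n, hn⟩
    refine ⟨(orb f n, η), ⟨orb_mem_closure f n, fun j => ?_⟩, rfl⟩
    show dist (η j) (orb f n j) ≤ ε
    rw [hn j]
    exact hclose (n + j)
  intro η hη
  obtain ⟨p, ⟨h1, h2⟩, rfl⟩ := hsub2 hη
  exact ⟨p.1, h1, h2⟩

lemma isOpenCover_iterJoin {X : Type*} [TopologicalSpace X] {T : X → X} (hT : Continuous T)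
    {𝒰 : Set (Set X)} (h : IsOpenCover 𝒰) (n : ℕ) : IsOpenCover (iterJoin T 𝒰 n) := by
  constructor
  · rintro V ⟨u, hu, rfl⟩
    exact isOpen_iInter_of_finite fun j => (h.1 _ (hu j)).preimage (hT.iterate _)
  · rw [eq_univ_iff_forall]
    intro x
    have hx : ∀ j : Fin n, ∃ U ∈ 𝒰, T^[(j : ℕ)] x ∈ U := by
      intro j
      have : T^[(j : ℕ)] x ∈ ⋃₀ 𝒰 := h.2 ▸ mem_univ _
      exact this
    choose u hu hxu using hx
    exact ⟨_, ⟨u, hu, rfl⟩, mem_iInter.mpr hxu⟩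

lemma exists_finset_card_coverNum {X : Type*} [TopologicalSpace X] [CompactSpace X]
    {𝒲 : Set (Set X)} (h : IsOpenCover 𝒲) :
    ∃ F : Finset (Set X), (↑F : Set (Set X)) ⊆ 𝒲 ∧
      ⋃₀ (↑F : Set (Set X)) = Set.univ ∧ F.card = coverNum 𝒲 := by
  classical
  have hne : {k | ∃ F : Finset (Set X), (↑F : Set (Set X)) ⊆ 𝒲 ∧
      ⋃₀ (↑F : Set (Set X)) = Set.univ ∧ F.card = k}.Nonempty := by
    obtain ⟨t, ht⟩ := IsCompact.elim_finite_subcover isCompact_univ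
      (fun U : 𝒲 => (U : Set X)) (fun U => h.1 _ U.2)
      (by rw [← sUnion_eq_iUnion, h.2])
    refine ⟨(t.image Subtype.val).card, t.image Subtype.val, ?_, ?_, rfl⟩
    · intro A hA
      rw [Finset.coe_image] at hA
      obtain ⟨U, _, rfl⟩ := hA
      exact U.2
    · apply eq_univ_of_univ_subset
      intro x hx
      obtain ⟨W, hW, hxW⟩ := mem_iUnion₂.mp (ht hx)
      exact ⟨(W : Set X), Finset.mem_coe.mpr (Finset.mem_image_of_mem _ hW), hxW⟩
  have hmem := Nat.sInf_mem hne
  obtain ⟨F, h1, h2, h3⟩ := hmem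
  exact ⟨F, h1, h2, h3⟩

lemma one_le_coverNum {X : Type*} [TopologicalSpace X] [CompactSpace X] [Nonempty X]
    {𝒲 : Set (Set X)} (h : IsOpenCover 𝒲) : 1 ≤ coverNum 𝒲 := by
  obtain ⟨F, _, hcov, hcard⟩ := exists_finset_card_coverNum h
  rw [← hcard, Nat.one_le_iff_ne_zero, ne_eq, Finset.card_eq_zero]
  rintro rfl
  simp only [Finset.coe_empty, sUnion_empty] at hcov
  exact (empty_ne_univ) hcov

lemma coverNum_le_of_map {X Y : Type*} [TopologicalSpace X] [TopologicalSpace Y]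
    {𝒜 : Set (Set X)} {ℬ : Set (Set Y)}
    (hB : ∃ F : Finset (Set Y), (↑F : Set (Set Y)) ⊆ ℬ ∧
      ⋃₀ (↑F : Set (Set Y)) = Set.univ ∧ F.card = coverNum ℬ)
    (hmap : ∀ F : Finset (Set Y), (↑F : Set (Set Y)) ⊆ ℬ → ⋃₀ (↑F : Set (Set Y)) = Set.univ →
      ∃ G : Finset (Set X), (↑G : Set (Set X)) ⊆ 𝒜 ∧
        ⋃₀ (↑G : Set (Set X)) = Set.univ ∧ G.card ≤ F.card) :
    coverNum 𝒜 ≤ coverNum ℬ := by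
  obtain ⟨F, h1, h2, h3⟩ := hB
  obtain ⟨G, g1, g2, g3⟩ := hmap F h1 h2
  calc coverNum 𝒜 ≤ G.card := Nat.sInf_le ⟨G, g1, g2, rfl⟩
    _ ≤ F.card := g3
    _ = coverNum ℬ := h3


lemma key (f : ℕ → ℂ) (hf : ∃ M : ℝ, ∀ n, ‖f n‖ ≤ M)
    (𝒰 : Set (Set ↥(orbitClosure f))) (h𝒰 : IsOpenCover 𝒰) :
    ∃ ε : ℝ, 0 < ε ∧ ∀ g : ℕ → ℂ, (∃ M : ℝ, ∀ n, ‖g n‖ ≤ M) →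
      (∀ n, dist (g n) (f n) ≤ ε) → coverEntropy (shiftOn f) 𝒰 ≤ AE g := by
  classical
  haveI := compactSpace_orbitClosure hf
  obtain ⟨m, r, hr, hleb⟩ := lebesgue hf h𝒰
  choose Usel hUsel hUsub using hleb
  refine ⟨r / 4, by positivity, ?_⟩
  intro g hg hclose
  haveI := compactSpace_orbitClosure hg
  set ε : ℝ := r / 4 with hεdef
  have hε : 0 < ε := by positivity
  set Vset : ↥(orbitClosure f) → Set ↥(orbitClosure g) :=
    fun ω => {η : ↥(orbitClosure g) | ∀ j < m, dist ((η : ℕ → ℂ) j) ((ω : ℕ → ℂ) j) < 2 * ε}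
    with hVsetdef
  set 𝒱 : Set (Set ↥(orbitClosure g)) := Set.range Vset with h𝒱def
  have h𝒱 : IsOpenCover 𝒱 := by
    constructor
    · rintro V ⟨ω, rfl⟩
      exact isOpen_cyl' ((ω : ℕ → ℂ)) m (2 * ε)
    · rw [eq_univ_iff_forall]
      intro η
      obtain ⟨ω, hω, hd⟩ := close_orbitClosure hf hclose (η : ℕ → ℂ) η.2
      refine ⟨Vset ⟨ω, hω⟩, ⟨⟨ω, hω⟩, rfl⟩, fun j _ => ?_⟩
      exact lt_of_le_of_lt (hd j) (by linarith)
  -- counting inequality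
  have hcount : ∀ n : ℕ,
      coverNum (iterJoin (shiftOn f) 𝒰 n) ≤ coverNum (iterJoin (shiftOn g) 𝒱 n) := by
    intro n
    apply coverNum_le_of_map
    · exact exists_finset_card_coverNum (isOpenCover_iterJoin (continuous_shiftOn g) h𝒱 n)
    · intro F hFsub hFcov
      have hdata : ∀ V ∈ F, ∃ w : Fin n → ↥(orbitClosure f),
          V = ⋂ j : Fin n, (shiftOn g)^[(j : ℕ)] ⁻¹' (Vset (w j)) := by
        intro V hV
        obtain ⟨u, hu, rfl⟩ := hFsub hV
        choose w hw using fun j => hu j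
        exact ⟨w, by simp_rw [hw]⟩
      choose! w hw using hdata
      set Φ : Set ↥(orbitClosure g) → Set ↥(orbitClosure f) :=
        fun V => ⋂ j : Fin n, (shiftOn f)^[(j : ℕ)] ⁻¹' (Usel (w V j)) with hΦdef
      refine ⟨F.image Φ, ?_, ?_, Finset.card_image_le⟩
      · rintro A hA
        rw [Finset.coe_image] at hA
        obtain ⟨V, hV, rfl⟩ := hA
        exact ⟨fun j => Usel (w V j), fun j => hUsel _, rfl⟩
      · rw [eq_univ_iff_forall]
        intro ξ
        -- approximate ξ by an orbit point of f
        have hξ : (ξ : ℕ → ℂ) ∈ closure (orbitSet f) := ξ.2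
        obtain ⟨p, hp⟩ : ∃ p : ℕ, ∀ i < n + m, dist (f (p + i)) ((ξ : ℕ → ℂ) i) < ε := by
          have hOopen := isOpen_cyl ((ξ : ℕ → ℂ)) (n + m) ε
          have hOmem : (ξ : ℕ → ℂ) ∈ {ζ : ℕ → ℂ | ∀ i < n + m, dist (ζ i) ((ξ : ℕ → ℂ) i) < ε} :=
            fun i _ => by simp [dist_self, hε]
          obtain ⟨ζ, hζO, q, hq⟩ := (_root_.mem_closure_iff.mp hξ) _ hOopen hOmem
          exact ⟨q, fun i hi => by rw [← hq i]; exact hζO i hi⟩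
        set ηp : ↥(orbitClosure g) := ⟨orb g p, orb_mem_closure g p⟩ with hηpdef
        obtain ⟨V, hVF, hηV⟩ : ∃ V ∈ F, ηp ∈ V := by
          have : ηp ∈ ⋃₀ (↑F : Set (Set ↥(orbitClosure g))) := hFcov ▸ mem_univ ηp
          obtain ⟨V, hVF, hηV⟩ := this
          exact ⟨V, hVF, hηV⟩
        refine ⟨Φ V, Finset.mem_coe.mpr (Finset.mem_image_of_mem Φ hVF), ?_⟩
        refine mem_iInter.mpr fun j => ?_
        show (shiftOn f)^[(j : ℕ)] ξ ∈ Usel (w V j)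
        apply hUsub (w V j)
        intro l hl
        have h2 : ∀ l' < m, dist (g (p + (l' + (j : ℕ)))) ((w V j : ℕ → ℂ) l') < 2 * ε := by
          have hmem : ηp ∈ ⋂ j : Fin n, (shiftOn g)^[(j : ℕ)] ⁻¹' (Vset (w V j)) :=
            (hw V hVF) ▸ hηV
          have hmem2 := mem_iInter.mp hmem j
          intro l' hl'
          have := hmem2 l' hl'
          rwa [shiftOn_iterate_coe] at this
        rw [shiftOn_iterate_coe]
        have hlj : l + (j : ℕ) < n + m := by omega
        calc dist ((ξ : ℕ → ℂ) (l + (j : ℕ))) ((w V j : ℕ → ℂ) l)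
            ≤ dist ((ξ : ℕ → ℂ) (l + (j : ℕ))) (g (p + (l + (j : ℕ))))
              + dist (g (p + (l + (j : ℕ)))) ((w V j : ℕ → ℂ) l) := dist_triangle _ _ _
          _ ≤ (dist ((ξ : ℕ → ℂ) (l + (j : ℕ))) (f (p + (l + (j : ℕ))))
              + dist (f (p + (l + (j : ℕ)))) (g (p + (l + (j : ℕ)))))
              + dist (g (p + (l + (j : ℕ)))) ((w V j : ℕ → ℂ) l) := by
                gcongr
                exact dist_triangle _ _ _
          _ < (ε + ε) + 2 * ε := by
                have ha : dist ((ξ : ℕ → ℂ) (l + (j : ℕ))) (f (p + (l + (j : ℕ)))) < ε := by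
                  rw [dist_comm]; exact hp _ hlj
                have hb : dist (f (p + (l + (j : ℕ)))) (g (p + (l + (j : ℕ)))) ≤ ε := by
                  rw [dist_comm]; exact hclose _
                have hc := h2 l hl
                linarith
          _ = r := by rw [hεdef]; ring
  -- entropy comparison
  have hone : ∀ n : ℕ, 1 ≤ coverNum (iterJoin (shiftOn f) 𝒰 n) := fun n =>
    one_le_coverNum (isOpenCover_iterJoin (continuous_shiftOn f) h𝒰 n)
  have hEnt : coverEntropy (shiftOn f) 𝒰 ≤ coverEntropy (shiftOn g) 𝒱 := by
    refine Filter.limsup_le_limsup (Filter.Eventually.of_forall fun n => ?_)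
    apply EReal.coe_le_coe_iff.mpr
    rcases Nat.eq_zero_or_pos n with hn | hn
    · subst hn; simp
    · apply div_le_div_of_nonneg_right ?_ (by positivity)
      apply Real.log_le_log (by exact_mod_cast hone n)
      exact_mod_cast hcount n
  refine hEnt.trans ?_
  exact le_biSup _ h𝒱

end AnqieAux

/-- Lower semi-continuity of anqie entropy: if a sequence of bounded
functions `f_k : ℕ → ℂ` converges to a bounded function `f` in the supremum norm,
then `AE(f) ≤ liminf_k AE(f_k)`. -/
theorem anqie_entropy_lower_semicontinuous (f : ℕ → ℂ) (hf : ∃ M : ℝ, ∀ n, ‖f n‖ ≤ M)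
    (F : ℕ → ℕ → ℂ) (hF : ∀ k, ∃ M : ℝ, ∀ n, ‖F k n‖ ≤ M)
    (hconv : Filter.Tendsto (fun k => ⨆ n : ℕ, (‖F k n - f n‖₊ : ENNReal))
      Filter.atTop (nhds 0)) :
    Anqie.AE f ≤ Filter.liminf (fun k => Anqie.AE (F k)) Filter.atTop := by
  have hAE : Anqie.AE f = ⨆ 𝒰 ∈ {𝒰 : Set (Set ↥(Anqie.orbitClosure f)) | Anqie.IsOpenCover 𝒰},
      Anqie.coverEntropy (Anqie.shiftOn f) 𝒰 := rfl
  rw [hAE]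
  apply iSup₂_le
  intro 𝒰 h𝒰
  obtain ⟨ε, hε, hkey⟩ := AnqieAux.key f hf 𝒰 h𝒰
  have hev : ∀ᶠ k in Filter.atTop,
      Anqie.coverEntropy (Anqie.shiftOn f) 𝒰 ≤ Anqie.AE (F k) := by
    have h2 : ∀ᶠ k in Filter.atTop,
        (⨆ n : ℕ, (‖F k n - f n‖₊ : ENNReal)) < ENNReal.ofReal ε :=
      hconv.eventually_lt_const (ENNReal.ofReal_pos.mpr hε)
    filter_upwards [h2] with k hk
    apply hkey (F k) (hF k)
    intro n
    have h3 : (‖F k n - f n‖₊ : ENNReal) ≤ ENNReal.ofReal ε :=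
      ((le_iSup (fun n => ((‖F k n - f n‖₊ : ENNReal))) n).trans_lt hk).le
    rw [dist_eq_norm]
    have h4 : ‖F k n - f n‖₊ ≤ ε.toNNReal := by
      rw [ENNReal.ofReal] at h3; exact_mod_cast h3
    calc ‖F k n - f n‖ = ((‖F k n - f n‖₊ : NNReal) : ℝ) := (coe_nnnorm _).symm
      _ ≤ (ε.toNNReal : ℝ) := by exact_mod_cast h4
      _ = ε := Real.coe_toNNReal ε hε.le
  exact Filter.le_liminf_of_le (by isBoundedDefault) hev
end

section
/- For any bounded functions f, g : ℕ → ℂ one has AE(f + g) ≤ AE(f) + AE(g), AE(f − g) ≤ AE(f) + AE(g), AE(f · g) ≤ AE(f) + AE(g), and moreover AE(f) ≤ AE(f + g) + AE(g) and AE(g) ≤ AE(f + g) + AE(f) (so that |AE(f) − AE(g)| ≤ AE(f ± g) whenever the difference is defined). -/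
open Filter Set Topology

/-!
Topological entropy does not increase under factor maps or on closed invariant subsystems, and
it is subadditive on products: an open cover of a compact product is refined by a product of
covers, whose cover numbers multiply. The orbit closure of `n ↦ (f n, g n)` is a closed
shift-invariant subset of `X_f × X_g`, so its entropy is at most `AE f + AE g`, and applying a
continuous `op` coordinatewise maps it onto the orbit closure of `n ↦ op (f n) (g n)`, a factor.
With `op` one of `+`, `-`, `*` this gives the first three inequalities; the last two are the
case `op = -` for the pairs `(f + g, g)` and `(f + g, f)`. Boundedness makes every orbit
closure compact.
-/

namespace Anqie

open Function

variable {X Y : Type*}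

/-- Empty members of `𝒱` are exempt, since pulling a cover back along a non-surjective map
creates them. -/
def Refines (𝒱 𝒰 : Set (Set X)) : Prop := ∀ V ∈ 𝒱, V.Nonempty → ∃ U ∈ 𝒰, V ⊆ U

lemma Refines.iterJoin {𝒱 𝒰 : Set (Set X)} (h : Refines 𝒱 𝒰) (T : X → X) (n : ℕ) :
    Refines (iterJoin T 𝒱 n) (iterJoin T 𝒰 n) := by
  rintro _ ⟨v, hv, rfl⟩ ⟨x, hx⟩
  rw [mem_iInter] at hx
  choose u hu hvu using fun j => h (v j) (hv j) ⟨_, hx j⟩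
  exact ⟨_, ⟨u, hu, rfl⟩, iInter_mono fun j => preimage_mono (hvu j)⟩

lemma preimage_iterJoin {T : X → X} {S : Y → Y} {p : X → Y} (hp : Semiconj p T S)
    (𝒰 : Set (Set Y)) (n : ℕ) :
    preimage p '' iterJoin S 𝒰 n = iterJoin T (preimage p '' 𝒰) n := by
  have key (u : Fin n → Set Y) :
      p ⁻¹' ⋂ j : Fin n, S^[j] ⁻¹' u j = ⋂ j : Fin n, T^[j] ⁻¹' (p ⁻¹' u j) := by
    ext x
    simp only [mem_preimage, mem_iInter, (hp.iterate_right _).eq]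
  ext V
  constructor
  · rintro ⟨_, ⟨u, hu, rfl⟩, rfl⟩
    exact ⟨fun j => p ⁻¹' u j, fun j => mem_image_of_mem _ (hu j), key u⟩
  · rintro ⟨v, hv, rfl⟩
    choose u hu huv using hv
    obtain rfl : v = fun j => p ⁻¹' u j := funext fun j => (huv j).symm
    exact ⟨_, ⟨u, hu, rfl⟩, key u⟩

lemma image2_prod_iterJoin_subset (T : X → X) (S : Y → Y) (𝒜 : Set (Set X))
    (ℬ : Set (Set Y)) (n : ℕ) :
    image2 (· ×ˢ ·) (iterJoin T 𝒜 n) (iterJoin S ℬ n) ⊆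
      iterJoin (Prod.map T S) (image2 (· ×ˢ ·) 𝒜 ℬ) n := by
  rintro _ ⟨_, ⟨a, ha, rfl⟩, _, ⟨b, hb, rfl⟩, rfl⟩
  refine ⟨fun j => a j ×ˢ b j, fun j => mem_image2_of_mem (ha j) (hb j), ?_⟩
  ext p
  simp only [mem_prod, mem_iInter, mem_preimage, Prod.map_iterate]
  exact forall_and.symm

lemma sUnion_image2_prod (𝒜 : Set (Set X)) (ℬ : Set (Set Y)) :
    ⋃₀ image2 (· ×ˢ ·) 𝒜 ℬ = ⋃₀ 𝒜 ×ˢ ⋃₀ ℬ := by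
  ext ⟨x, y⟩
  simp only [mem_sUnion, mem_image2, mem_prod]
  aesop

lemma coverNum_le_card {𝒱 : Set (Set X)} {F : Finset (Set X)} (hF : ↑F ⊆ 𝒱)
    (hcov : ⋃₀ (F : Set (Set X)) = univ) : coverNum 𝒱 ≤ F.card :=
  Nat.sInf_le ⟨F, hF, hcov, rfl⟩

lemma log_natCast_le_log_natCast {m n : ℕ} (h : m ≤ n) : Real.log m ≤ Real.log n := by
  rcases m.eq_zero_or_pos with rfl | hm
  · simpa using Real.log_natCast_nonneg n
  · exact Real.log_le_log (by exact_mod_cast hm) (by exact_mod_cast h)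

lemma log_natCast_le_add_of_le_mul {k a b : ℕ} (h : k ≤ a * b) :
    Real.log k ≤ Real.log a + Real.log b := by
  rcases k.eq_zero_or_pos with rfl | hk
  · simpa using add_nonneg (Real.log_natCast_nonneg a) (Real.log_natCast_nonneg b)
  obtain ⟨ha, hb⟩ := mul_ne_zero_iff.1 (hk.trans_le h).ne'
  calc Real.log k ≤ Real.log ↑(a * b) := log_natCast_le_log_natCast h
    _ = Real.log a + Real.log b := by
      rw [Nat.cast_mul, Real.log_mul (by exact_mod_cast ha) (by exact_mod_cast hb)]

lemma coverEntropy_le_of_coverNum_le {T : X → X} {S : Y → Y} {𝒱 : Set (Set X)}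
    {𝒰 : Set (Set Y)} (h : ∀ n, coverNum (iterJoin S 𝒰 n) ≤ coverNum (iterJoin T 𝒱 n)) :
    coverEntropy S 𝒰 ≤ coverEntropy T 𝒱 :=
  limsup_le_limsup (.of_forall fun n => EReal.coe_le_coe_iff.2 <|
    div_le_div_of_nonneg_right (log_natCast_le_log_natCast (h n)) n.cast_nonneg)

lemma coverEntropy_nonneg (T : X → X) (𝒰 : Set (Set X)) : 0 ≤ coverEntropy T 𝒰 :=
  le_limsup_of_frequently_le (.of_forall fun n => EReal.coe_nonneg.2 (by positivity))

variable [TopologicalSpace X]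

lemma IsOpenCover.iterJoin {T : X → X} (hT : Continuous T) {𝒰 : Set (Set X)}
    (h𝒰 : IsOpenCover 𝒰) (n : ℕ) : IsOpenCover (iterJoin T 𝒰 n) := by
  refine ⟨?_, sUnion_eq_univ_iff.2 fun x => ?_⟩
  · rintro _ ⟨u, hu, rfl⟩
    exact isOpen_iInter_of_finite fun j => (h𝒰.1 _ (hu j)).preimage (hT.iterate _)
  · choose u hu hxu using fun j : Fin n => sUnion_eq_univ_iff.1 h𝒰.2 (T^[j] x)
    exact ⟨_, ⟨u, hu, rfl⟩, mem_iInter.2 hxu⟩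

lemma IsOpenCover.exists_finset_subcover [CompactSpace X] {𝒱 : Set (Set X)}
    (h𝒱 : IsOpenCover 𝒱) : ∃ F : Finset (Set X), ↑F ⊆ 𝒱 ∧ ⋃₀ (F : Set (Set X)) = univ := by
  obtain ⟨t, ht⟩ := isCompact_univ.elim_finite_subcover (fun U : 𝒱 => (U : Set X))
    (fun U => h𝒱.1 U U.2) (by rw [← sUnion_eq_iUnion, h𝒱.2])
  refine ⟨t.image Subtype.val, by simp, ?_⟩
  simpa [sUnion_image, eq_univ_iff_forall] using ht

lemma IsOpenCover.exists_finset_card_eq_coverNum [CompactSpace X] {𝒱 : Set (Set X)}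
    (h𝒱 : IsOpenCover 𝒱) :
    ∃ F : Finset (Set X), ↑F ⊆ 𝒱 ∧ ⋃₀ (F : Set (Set X)) = univ ∧ F.card = coverNum 𝒱 := by
  obtain ⟨F, hF, hcov⟩ := h𝒱.exists_finset_subcover
  exact Nat.sInf_mem (s := {k | ∃ F : Finset (Set X), ↑F ⊆ 𝒱 ∧
    ⋃₀ (F : Set (Set X)) = univ ∧ F.card = k}) ⟨_, F, hF, hcov, rfl⟩

lemma coverNum_le_of_refines [CompactSpace X] {𝒱 : Set (Set X)} (h𝒱 : IsOpenCover 𝒱)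
    {𝒰 : Set (Set Y)} {i : Y → X} (h : Refines (preimage i '' 𝒱) 𝒰) :
    coverNum 𝒰 ≤ coverNum 𝒱 := by
  classical
  obtain ⟨F, hF, hcov, hcard⟩ := h𝒱.exists_finset_card_eq_coverNum
  have hsel (V : Set X) : ∃ U, V ∈ F → (i ⁻¹' V).Nonempty → U ∈ 𝒰 ∧ i ⁻¹' V ⊆ U := by
    by_cases hV : V ∈ F ∧ (i ⁻¹' V).Nonempty
    · obtain ⟨U, hU, hVU⟩ := h _ (mem_image_of_mem _ (hF hV.1)) hV.2
      exact ⟨U, fun _ _ => ⟨hU, hVU⟩⟩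
    · exact ⟨∅, fun h₁ h₂ => (hV ⟨h₁, h₂⟩).elim⟩
  choose r hr using hsel
  set G := (F.filter fun V => (i ⁻¹' V).Nonempty).image r
  have hG : ↑G ⊆ 𝒰 := by
    simp only [G, Finset.coe_image, Finset.coe_filter, image_subset_iff]
    exact fun V ⟨hV, hne⟩ => (hr V hV hne).1
  have hGcov : ⋃₀ (G : Set (Set Y)) = univ := by
    refine sUnion_eq_univ_iff.2 fun y => ?_
    obtain ⟨V, hV, hyV⟩ := sUnion_eq_univ_iff.1 hcov (i y)
    exact ⟨r V, Finset.mem_image_of_mem _ (Finset.mem_filter.2 ⟨hV, y, hyV⟩),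
      (hr V hV ⟨y, hyV⟩).2 hyV⟩
  calc coverNum 𝒰 ≤ G.card := coverNum_le_card hG hGcov
    _ ≤ F.card := Finset.card_image_le.trans (Finset.card_filter_le _ _)
    _ = coverNum 𝒱 := hcard

lemma coverNum_le_coverNum_preimage [CompactSpace X] {π : X → Y} (hπ : Surjective π)
    {𝒰 : Set (Set Y)} (h : IsOpenCover (preimage π '' 𝒰)) :
    coverNum 𝒰 ≤ coverNum (preimage π '' 𝒰) := by
  -- A section of `π` pulls `π ⁻¹' U` back to `U`.
  refine coverNum_le_of_refines (i := surjInv hπ) h ?_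
  rintro _ ⟨_, ⟨U, hU, rfl⟩, rfl⟩ -
  rw [← preimage_comp, (rightInverse_surjInv hπ).comp_eq_id, preimage_id]
  exact ⟨U, hU, subset_rfl⟩

lemma coverEntropy_le_of_refines [CompactSpace X] {T : X → X} {S : Y → Y} (hT : Continuous T)
    {i : Y → X} (hi : Semiconj i S T) {𝒱 : Set (Set X)} (h𝒱 : IsOpenCover 𝒱)
    {𝒰 : Set (Set Y)} (h : Refines (preimage i '' 𝒱) 𝒰) :
    coverEntropy S 𝒰 ≤ coverEntropy T 𝒱 :=
  coverEntropy_le_of_coverNum_le fun n => coverNum_le_of_refines (h𝒱.iterJoin hT n)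
    (by rw [preimage_iterJoin hi]; exact h.iterJoin S n)

lemma coverEntropy_le_entropy (T : X → X) {𝒰 : Set (Set X)} (h𝒰 : IsOpenCover 𝒰) :
    coverEntropy T 𝒰 ≤ entropy T :=
  le_iSup₂_of_le 𝒰 h𝒰 le_rfl

variable [TopologicalSpace Y]

lemma IsOpenCover.preimage {p : X → Y} (hp : Continuous p) {𝒰 : Set (Set Y)}
    (h𝒰 : IsOpenCover 𝒰) : IsOpenCover (preimage p '' 𝒰) := by
  refine ⟨?_, sUnion_eq_univ_iff.2 fun x => ?_⟩
  · rintro _ ⟨U, hU, rfl⟩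
    exact (h𝒰.1 U hU).preimage hp
  · obtain ⟨U, hU, hxU⟩ := sUnion_eq_univ_iff.1 h𝒰.2 (p x)
    exact ⟨_, mem_image_of_mem _ hU, hxU⟩

theorem entropy_le_of_surjective [CompactSpace X] {T : X → X} {S : Y → Y} (hT : Continuous T)
    {π : X → Y} (hπ : Continuous π) (hsurj : Surjective π)
    (hsemi : Semiconj π T S) : entropy S ≤ entropy T := by
  refine iSup₂_le fun 𝒰 h𝒰 => ?_
  have h𝒱 := h𝒰.preimage hπ
  refine le_trans (coverEntropy_le_of_coverNum_le fun n => ?_) (coverEntropy_le_entropy T h𝒱)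
  have hn := h𝒱.iterJoin hT n
  rw [← preimage_iterJoin hsemi] at hn ⊢
  exact coverNum_le_coverNum_preimage hsurj hn

theorem entropy_le_of_isInducing [CompactSpace X] {T : X → X} {S : Y → Y} (hT : Continuous T)
    {i : Y → X} (hi : IsInducing i) (hrange : IsClosed (range i))
    (hsemi : Semiconj i S T) : entropy S ≤ entropy T := by
  refine iSup₂_le fun 𝒰 h𝒰 => ?_
  -- Members of `𝒰` extend to open sets of `X`; the rest of `X` is covered by `(range i)ᶜ`,
  -- whose pullback is empty.
  set 𝒱 : Set (Set X) := {V | IsOpen V ∧ i ⁻¹' V ∈ 𝒰} ∪ {(range i)ᶜ}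
  have h𝒱 : IsOpenCover 𝒱 := by
    refine ⟨?_, sUnion_eq_univ_iff.2 fun x => ?_⟩
    · rintro V (hV | rfl)
      exacts [hV.1, hrange.isOpen_compl]
    · by_cases hx : x ∈ range i
      · obtain ⟨y, rfl⟩ := hx
        obtain ⟨U, hU, hyU⟩ := sUnion_eq_univ_iff.1 h𝒰.2 y
        obtain ⟨V, hV, rfl⟩ := hi.isOpen_iff.1 (h𝒰.1 U hU)
        exact ⟨V, Or.inl ⟨hV, hU⟩, hyU⟩
      · exact ⟨_, Or.inr rfl, hx⟩
  have href : Refines (preimage i '' 𝒱) 𝒰 := by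
    rintro _ ⟨V, hV | rfl, rfl⟩ ⟨y, hy⟩
    · exact ⟨_, hV.2, subset_rfl⟩
    · exact (hy (mem_range_self y)).elim
  exact (coverEntropy_le_of_refines hT hsemi h𝒱 href).trans (coverEntropy_le_entropy T h𝒱)

lemma exists_isOpen_finset_cover_prod_subset [CompactSpace Y] {𝒲 : Set (Set (X × Y))}
    (h𝒲 : IsOpenCover 𝒲) (x : X) :
    ∃ u : Set X, IsOpen u ∧ x ∈ u ∧ ∃ s : Finset (Set Y),
      (∀ v ∈ s, IsOpen v ∧ ∃ W ∈ 𝒲, u ×ˢ v ⊆ W) ∧ ⋃₀ (s : Set (Set Y)) = univ := by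
  have hbox (y : Y) : ∃ (u : Set X) (v : Set Y), IsOpen u ∧ IsOpen v ∧ x ∈ u ∧ y ∈ v ∧
      ∃ W ∈ 𝒲, u ×ˢ v ⊆ W := by
    obtain ⟨W, hW, hxy⟩ := sUnion_eq_univ_iff.1 h𝒲.2 (x, y)
    obtain ⟨u, v, hu, hv, hxu, hyv, huv⟩ := isOpen_prod_iff.1 (h𝒲.1 W hW) x y hxy
    exact ⟨u, v, hu, hv, hxu, hyv, W, hW, huv⟩
  choose u v hu hv hxu hyv hsub using hbox
  obtain ⟨t, ht⟩ :=
    isCompact_univ.elim_finite_subcover v hv fun y _ => mem_iUnion.2 ⟨y, hyv y⟩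
  refine ⟨⋂ y ∈ t, u y, isOpen_biInter_finset fun y _ => hu y,
    mem_iInter₂.2 fun y _ => hxu y, t.image v, ?_,
    by simpa [sUnion_image, eq_univ_iff_forall] using ht⟩
  simp only [Finset.mem_image]
  rintro _ ⟨y, hy, rfl⟩
  obtain ⟨W, hW, hWsub⟩ := hsub y
  exact ⟨hv y, W, hW, (prod_mono (biInter_subset_of_mem hy) subset_rfl).trans hWsub⟩

lemma IsOpenCover.exists_image2_prod_refines [CompactSpace X] [CompactSpace Y]
    {𝒲 : Set (Set (X × Y))} (h𝒲 : IsOpenCover 𝒲) :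
    ∃ (𝒜 : Set (Set X)) (ℬ : Set (Set Y)), IsOpenCover 𝒜 ∧ IsOpenCover ℬ ∧
      Refines (image2 (· ×ˢ ·) 𝒜 ℬ) 𝒲 := by
  -- `𝒜` consists of finitely many of the tubes `u x`, and `ℬ` is the common refinement of the
  -- corresponding finite covers `s x`.
  choose u hu hxu s hs hscov using exists_isOpen_finset_cover_prod_subset h𝒲
  obtain ⟨t, ht⟩ :=
    isCompact_univ.elim_finite_subcover u hu fun x _ => mem_iUnion.2 ⟨x, hxu x⟩
  refine ⟨u '' ↑t, {B | ∃ c : X → Set Y, (∀ x ∈ t, c x ∈ s x) ∧ B = ⋂ x ∈ t, c x},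
    ⟨?_, ?_⟩, ⟨?_, ?_⟩, ?_⟩
  · rintro _ ⟨x, -, rfl⟩
    exact hu x
  · simpa [sUnion_image, eq_univ_iff_forall] using ht
  · rintro _ ⟨c, hc, rfl⟩
    exact isOpen_biInter_finset fun x hx => (hs x _ (hc x hx)).1
  · refine sUnion_eq_univ_iff.2 fun y => ?_
    choose c hc hyc using fun x => sUnion_eq_univ_iff.1 (hscov x) y
    exact ⟨_, ⟨c, fun x _ => hc x, rfl⟩, mem_iInter₂.2 fun x _ => hyc x⟩
  · rintro _ ⟨_, ⟨x, hx, rfl⟩, _, ⟨c, hc, rfl⟩, rfl⟩ -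
    obtain ⟨W, hW, hWsub⟩ := (hs x _ (hc x hx)).2
    exact ⟨W, hW, (prod_mono subset_rfl (biInter_subset_of_mem hx)).trans hWsub⟩

lemma IsOpenCover.image2_prod {𝒜 : Set (Set X)} {ℬ : Set (Set Y)} (h𝒜 : IsOpenCover 𝒜)
    (hℬ : IsOpenCover ℬ) : IsOpenCover (image2 (· ×ˢ ·) 𝒜 ℬ) := by
  refine ⟨?_, by rw [sUnion_image2_prod, h𝒜.2, hℬ.2, univ_prod_univ]⟩
  rintro _ ⟨A, hA, B, hB, rfl⟩
  exact (h𝒜.1 A hA).prod (hℬ.1 B hB)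

lemma coverNum_le_mul [CompactSpace X] [CompactSpace Y] {𝒜 : Set (Set X)} {ℬ : Set (Set Y)}
    {𝒲 : Set (Set (X × Y))} (h𝒜 : IsOpenCover 𝒜) (hℬ : IsOpenCover ℬ)
    (h : image2 (· ×ˢ ·) 𝒜 ℬ ⊆ 𝒲) : coverNum 𝒲 ≤ coverNum 𝒜 * coverNum ℬ := by
  classical
  obtain ⟨F, hF, hFcov, hFcard⟩ := h𝒜.exists_finset_card_eq_coverNum
  obtain ⟨G, hG, hGcov, hGcard⟩ := hℬ.exists_finset_card_eq_coverNum
  rw [← hFcard, ← hGcard]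
  refine (coverNum_le_card (F := Finset.image₂ (· ×ˢ ·) F G) ?_ ?_).trans
    (Finset.card_image₂_le _ _ _)
  · rw [Finset.coe_image₂]
    exact (image2_subset hF hG).trans h
  · rw [Finset.coe_image₂, sUnion_image2_prod, hFcov, hGcov, univ_prod_univ]

lemma coverEntropy_prodMap_le [CompactSpace X] [CompactSpace Y] {T : X → X} {S : Y → Y}
    (hT : Continuous T) (hS : Continuous S) {𝒜 : Set (Set X)} {ℬ : Set (Set Y)}
    (h𝒜 : IsOpenCover 𝒜) (hℬ : IsOpenCover ℬ) :
    coverEntropy (Prod.map T S) (image2 (· ×ˢ ·) 𝒜 ℬ) ≤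
      coverEntropy T 𝒜 + coverEntropy S ℬ := by
  have hlog (n : ℕ) :
      Real.log (coverNum (iterJoin (Prod.map T S) (image2 (· ×ˢ ·) 𝒜 ℬ) n)) / n ≤
        Real.log (coverNum (iterJoin T 𝒜 n)) / n +
          Real.log (coverNum (iterJoin S ℬ n)) / n := by
    rw [← add_div]
    exact div_le_div_of_nonneg_right (log_natCast_le_add_of_le_mul <| coverNum_le_mul
      (h𝒜.iterJoin hT n) (hℬ.iterJoin hS n) (image2_prod_iterJoin_subset T S 𝒜 ℬ n))
      n.cast_nonneg
  have hA := (coverEntropy_nonneg T 𝒜).trans_lt' EReal.bot_lt_zero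
  have hB := (coverEntropy_nonneg S ℬ).trans_lt' EReal.bot_lt_zero
  refine le_trans (limsup_le_limsup (.of_forall fun n => ?_))
    (EReal.limsup_add_le (.inl hA.ne') (.inr hB.ne'))
  exact (EReal.coe_le_coe_iff.2 (hlog n)).trans_eq (EReal.coe_add _ _)

theorem entropy_prodMap_le [CompactSpace X] [CompactSpace Y] {T : X → X} {S : Y → Y}
    (hT : Continuous T) (hS : Continuous S) :
    entropy (Prod.map T S) ≤ entropy T + entropy S := by
  refine iSup₂_le fun 𝒲 h𝒲 => ?_
  obtain ⟨𝒜, ℬ, h𝒜, hℬ, href⟩ := h𝒲.exists_image2_prod_refines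
  calc coverEntropy (Prod.map T S) 𝒲
      ≤ coverEntropy (Prod.map T S) (image2 (· ×ˢ ·) 𝒜 ℬ) :=
        coverEntropy_le_of_refines (hT.prodMap hS) Semiconj.id_left (h𝒜.image2_prod hℬ)
          (by rwa [preimage_id_eq, image_id])
    _ ≤ coverEntropy T 𝒜 + coverEntropy S ℬ := coverEntropy_prodMap_le hT hS h𝒜 hℬ
    _ ≤ entropy T + entropy S :=
        add_le_add (coverEntropy_le_entropy T h𝒜) (coverEntropy_le_entropy S hℬ)

variable {E F G : Type*} [TopologicalSpace E] [TopologicalSpace F] [TopologicalSpace G]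

lemma orbitClosure_isCompact [T2Space E] {f : ℕ → E} {K : Set E} (hK : IsCompact K)
    (hfK : ∀ n, f n ∈ K) : IsCompact (orbitClosure f) := by
  refine (isCompact_univ_pi fun _ : ℕ => hK).of_isClosed_subset isClosed_closure ?_
  refine closure_minimal ?_ (isClosed_set_pi fun _ _ => hK.isClosed)
  rintro ω ⟨n, hn⟩ k -
  exact hn k ▸ hfK (n + k)

lemma continuous_shiftOn (f : ℕ → E) : Continuous (shiftOn f) := by
  apply Continuous.subtype_mk
  exact continuous_pi fun k => (continuous_apply (k + 1)).comp continuous_subtype_val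

lemma mapsTo_comp_orbitClosure {φ : E → F} (hφ : Continuous φ) (f : ℕ → E) :
    MapsTo (φ ∘ ·) (orbitClosure f) (orbitClosure (φ ∘ f)) := fun _ hω =>
  map_mem_closure (Pi.continuous_postcomp hφ) hω
    (by rintro _ ⟨n, hn⟩; exact ⟨n, fun k => congrArg φ (hn k)⟩)

theorem AE_comp_le [T2Space F] {f : ℕ → E} (hf : IsCompact (orbitClosure f)) {φ : E → F}
    (hφ : Continuous φ) : AE (φ ∘ f) ≤ AE f := by
  have hΦ : Continuous (φ ∘ · : (ℕ → E) → (ℕ → F)) := Pi.continuous_postcomp hφ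
  have hmaps := mapsTo_comp_orbitClosure hφ f
  have hsurj : SurjOn (φ ∘ ·) (orbitClosure f) (orbitClosure (φ ∘ f)) := by
    refine closure_minimal ?_ (hf.image hΦ).isClosed
    rintro ω ⟨n, hn⟩
    exact ⟨_, subset_closure ⟨n, fun k => rfl⟩, funext fun k => (hn k).symm⟩
  have : CompactSpace (orbitClosure f) := isCompact_iff_compactSpace.1 hf
  exact entropy_le_of_surjective (continuous_shiftOn f) (hΦ.restrict hmaps)
    (hmaps.restrict_surjective_iff.2 hsurj) fun _ => rfl

theorem AE_pair_le {f : ℕ → E} {g : ℕ → F} (hf : IsCompact (orbitClosure f))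
    (hg : IsCompact (orbitClosure g)) : AE (fun n => (f n, g n)) ≤ AE f + AE g := by
  set P : ℕ → E × F := fun n => (f n, g n)
  have hfst : MapsTo (Prod.fst ∘ ·) (orbitClosure P) (orbitClosure f) :=
    mapsTo_comp_orbitClosure continuous_fst P
  have hsnd : MapsTo (Prod.snd ∘ ·) (orbitClosure P) (orbitClosure g) :=
    mapsTo_comp_orbitClosure continuous_snd P
  let i : orbitClosure P → orbitClosure f × orbitClosure g := fun ω =>
    (hfst.restrict _ _ _ ω, hsnd.restrict _ _ _ ω)
  let zip : orbitClosure f × orbitClosure g → (ℕ → E × F) := fun q k => (q.1.1 k, q.2.1 k)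
  have hi : Continuous i := ((Pi.continuous_postcomp continuous_fst).restrict hfst).prodMk
    ((Pi.continuous_postcomp continuous_snd).restrict hsnd)
  have hzip : Continuous zip := continuous_pi fun k =>
    ((continuous_apply k).comp (continuous_subtype_val.comp continuous_fst)).prodMk
      ((continuous_apply k).comp (continuous_subtype_val.comp continuous_snd))
  have hrange : range i = zip ⁻¹' orbitClosure P := by
    ext q
    refine ⟨?_, fun hq => ⟨⟨zip q, hq⟩, rfl⟩⟩
    rintro ⟨ω, rfl⟩
    exact ω.2
  have : CompactSpace (orbitClosure f) := isCompact_iff_compactSpace.1 hf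
  have : CompactSpace (orbitClosure g) := isCompact_iff_compactSpace.1 hg
  calc AE P ≤ entropy (Prod.map (shiftOn f) (shiftOn g)) :=
        entropy_le_of_isInducing ((continuous_shiftOn f).prodMap (continuous_shiftOn g))
          (IsInducing.of_comp hi hzip IsInducing.subtypeVal)
          (hrange ▸ isClosed_closure.preimage hzip) fun _ => rfl
    _ ≤ AE f + AE g := entropy_prodMap_le (continuous_shiftOn f) (continuous_shiftOn g)

theorem AE_comp₂_le [T2Space E] [T2Space F] [T2Space G] {f : ℕ → E} {g : ℕ → F}
    {K : Set E} {L : Set F} (hK : IsCompact K) (hL : IsCompact L) (hfK : ∀ n, f n ∈ K)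
    (hgL : ∀ n, g n ∈ L) {op : E → F → G} (hop : Continuous (uncurry op)) :
    AE (fun n => op (f n) (g n)) ≤ AE f + AE g :=
  (AE_comp_le (orbitClosure_isCompact (hK.prod hL) fun n => ⟨hfK n, hgL n⟩) hop).trans
    (AE_pair_le (orbitClosure_isCompact hK hfK) (orbitClosure_isCompact hL hgL))

end Anqie

/-- For bounded `f g : ℕ → ℂ`:
`AE(f+g), AE(f−g), AE(f·g) ≤ AE(f)+AE(g)`, and
`AE(f) ≤ AE(f+g)+AE(g)`, `AE(g) ≤ AE(f+g)+AE(f)`. -/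
theorem anqie_entropy_add_sub_mul_ineq (f g : ℕ → ℂ)
    (hf : ∃ M : ℝ, ∀ n, ‖f n‖ ≤ M) (hg : ∃ M : ℝ, ∀ n, ‖g n‖ ≤ M) :
    Anqie.AE (f + g) ≤ Anqie.AE f + Anqie.AE g ∧
    Anqie.AE (f - g) ≤ Anqie.AE f + Anqie.AE g ∧
    Anqie.AE (f * g) ≤ Anqie.AE f + Anqie.AE g ∧
    Anqie.AE f ≤ Anqie.AE (f + g) + Anqie.AE g ∧
    Anqie.AE g ≤ Anqie.AE (f + g) + Anqie.AE f := by
  obtain ⟨Mf, hMf⟩ := hf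
  obtain ⟨Mg, hMg⟩ := hg
  have hf : ∀ n, f n ∈ Metric.closedBall 0 Mf := fun n => mem_closedBall_zero_iff.2 (hMf n)
  have hg : ∀ n, g n ∈ Metric.closedBall 0 Mg := fun n => mem_closedBall_zero_iff.2 (hMg n)
  have hfg : ∀ n, (f + g) n ∈ Metric.closedBall 0 (Mf + Mg) := fun n =>
    mem_closedBall_zero_iff.2 ((norm_add_le _ _).trans (add_le_add (hMf n) (hMg n)))
  have hK := isCompact_closedBall (0 : ℂ)
  refine ⟨Anqie.AE_comp₂_le (op := (· + ·)) (hK _) (hK _) hf hg continuous_add,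
    Anqie.AE_comp₂_le (op := (· - ·)) (hK _) (hK _) hf hg continuous_sub,
    Anqie.AE_comp₂_le (op := (· * ·)) (hK _) (hK _) hf hg continuous_mul, ?_, ?_⟩
  · simpa using Anqie.AE_comp₂_le (op := (· - ·)) (hK _) (hK _) hfg hg continuous_sub
  · simpa using Anqie.AE_comp₂_le (op := (· - ·)) (hK _) (hK _) hfg hf continuous_sub
end

section
/- Let c > 0 be a constant and let f : ℕ → ℂ be a bounded function with |f(n)| > c for all n ∈ ℕ. Then the pointwise reciprocal 1/f is a bounded function and AE(1/f) = AE(f). -/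
open Filter Set Topology

namespace Anqie

section Aux

variable {X Y : Type*} [TopologicalSpace X] [TopologicalSpace Y]

/-- Pullback of a family of sets along a map. -/
def pullCover (φ : X → Y) (𝒰 : Set (Set Y)) : Set (Set X) := (fun U => φ ⁻¹' U) '' 𝒰

lemma isOpenCover_pullCover {φ : X → Y} (hφ : Continuous φ) {𝒰 : Set (Set Y)}
    (h : IsOpenCover 𝒰) : IsOpenCover (pullCover φ 𝒰) := by
  constructor
  · rintro _ ⟨U, hU, rfl⟩
    exact (h.1 U hU).preimage hφ
  · apply eq_univ_of_forall
    intro x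
    have : φ x ∈ ⋃₀ 𝒰 := by rw [h.2]; trivial
    obtain ⟨U, hU, hxU⟩ := this
    exact ⟨φ ⁻¹' U, ⟨U, hU, rfl⟩, hxU⟩

lemma iterJoin_pullCover (φ : X → Y) {T : X → X} {S : Y → Y}
    (hconj : ∀ x, φ (T x) = S (φ x)) (𝒰 : Set (Set Y)) (n : ℕ) :
    iterJoin T (pullCover φ 𝒰) n = pullCover φ (iterJoin S 𝒰 n) := by
  have hsemi : Function.Semiconj φ T S := hconj
  have hiter : ∀ (j : ℕ) (w : Set Y), T^[j] ⁻¹' (φ ⁻¹' w) = φ ⁻¹' (S^[j] ⁻¹' w) := by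
    intro j w
    ext x
    simp only [Set.mem_preimage]
    rw [(hsemi.iterate_right j) x]
  ext V
  constructor
  · rintro ⟨u, hu, rfl⟩
    have : ∀ j : Fin n, ∃ w ∈ 𝒰, φ ⁻¹' w = u j := fun j => hu j
    choose w hw hwu using this
    refine ⟨⋂ j : Fin n, S^[(j : ℕ)] ⁻¹' w j, ⟨w, hw, rfl⟩, ?_⟩
    show φ ⁻¹' (⋂ j : Fin n, S^[(j : ℕ)] ⁻¹' w j) = _
    rw [Set.preimage_iInter]
    exact iInter_congr fun j => by rw [← hwu j, hiter]
  · rintro ⟨W, ⟨w, hw, rfl⟩, rfl⟩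
    refine ⟨fun j => φ ⁻¹' w j, fun j => ⟨w j, hw j, rfl⟩, ?_⟩
    show φ ⁻¹' (⋂ j : Fin n, S^[(j : ℕ)] ⁻¹' w j) = _
    rw [Set.preimage_iInter]
    exact iInter_congr fun j => (hiter _ _).symm

lemma le_coverNum {𝒱 : Set (Set X)} {𝒲 : Set (Set Y)}
    (h : ∀ F : Finset (Set Y), (↑F : Set (Set Y)) ⊆ 𝒲 → ⋃₀ (↑F : Set (Set Y)) = univ →
      ∃ G : Finset (Set X), (↑G : Set (Set X)) ⊆ 𝒱 ∧ ⋃₀ (↑G : Set (Set X)) = univ ∧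
        G.card ≤ F.card)
    (hne : ∃ F : Finset (Set Y), (↑F : Set (Set Y)) ⊆ 𝒲 ∧ ⋃₀ (↑F : Set (Set Y)) = univ) :
    coverNum 𝒱 ≤ coverNum 𝒲 := by
  have hA : {k | ∃ F : Finset (Set Y), (↑F : Set (Set Y)) ⊆ 𝒲 ∧
      ⋃₀ (↑F : Set (Set Y)) = univ ∧ F.card = k}.Nonempty := by
    obtain ⟨F, h1, h2⟩ := hne
    exact ⟨F.card, F, h1, h2, rfl⟩
  obtain ⟨F, h1, h2, h3⟩ := Nat.sInf_mem hA
  obtain ⟨G, hG1, hG2, hG3⟩ := h F h1 h2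
  calc coverNum 𝒱 ≤ G.card := Nat.sInf_le ⟨G, hG1, hG2, rfl⟩
    _ ≤ F.card := hG3
    _ = coverNum 𝒲 := h3

lemma exists_finite_subcover [CompactSpace X] {𝒱 : Set (Set X)} (h : IsOpenCover 𝒱) :
    ∃ F : Finset (Set X), (↑F : Set (Set X)) ⊆ 𝒱 ∧ ⋃₀ (↑F : Set (Set X)) = univ := by
  classical
  have hcov : (univ : Set X) ⊆ ⋃ V : 𝒱, (V : Set X) := by
    rw [← sUnion_eq_iUnion, h.2]
  obtain ⟨t, ht⟩ := isCompact_univ.elim_finite_subcover (fun V : 𝒱 => (V : Set X))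
    (fun V => h.1 V V.2) hcov
  refine ⟨t.image Subtype.val, ?_, ?_⟩
  · intro V hV
    simp only [Finset.coe_image, Set.mem_image] at hV
    obtain ⟨W, _, rfl⟩ := hV
    exact W.2
  · apply eq_univ_of_univ_subset
    intro x hx
    obtain ⟨V, hVt, hxV⟩ := mem_iUnion₂.1 (ht hx)
    exact ⟨(V : Set X), by simp only [Finset.coe_image, Set.mem_image]; exact ⟨V, hVt, rfl⟩, hxV⟩

lemma isOpenCover_iterJoin {T : X → X} (hT : Continuous T) {𝒰 : Set (Set X)}
    (h : IsOpenCover 𝒰) (n : ℕ) : IsOpenCover (iterJoin T 𝒰 n) := by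
  constructor
  · rintro _ ⟨u, hu, rfl⟩
    exact isOpen_iInter_of_finite fun j => (h.1 _ (hu j)).preimage (hT.iterate _)
  · apply eq_univ_of_forall
    intro x
    have : ∀ j : Fin n, ∃ u ∈ 𝒰, T^[(j : ℕ)] x ∈ u := by
      intro j
      have : T^[(j : ℕ)] x ∈ ⋃₀ 𝒰 := by rw [h.2]; trivial
      exact this
    choose u hu hxu using this
    exact ⟨⋂ j : Fin n, T^[(j : ℕ)] ⁻¹' u j, ⟨u, hu, rfl⟩, mem_iInter.2 fun j => hxu j⟩

lemma coverNum_iterJoin_pull [CompactSpace X] [CompactSpace Y] {φ : X → Y}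
    (hφ : Continuous φ) (hφs : Function.Surjective φ) {T : X → X} {S : Y → Y}
    (hT : Continuous T) (hS : Continuous S) (hconj : ∀ x, φ (T x) = S (φ x))
    {𝒰 : Set (Set Y)} (h𝒰 : IsOpenCover 𝒰) (n : ℕ) :
    coverNum (iterJoin S 𝒰 n) = coverNum (iterJoin T (pullCover φ 𝒰) n) := by
  have hpull : iterJoin T (pullCover φ 𝒰) n = pullCover φ (iterJoin S 𝒰 n) :=
    iterJoin_pullCover φ hconj 𝒰 n
  apply le_antisymm
  · -- from subcovers on X side (pullbacks) produce subcovers on Y side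
    apply le_coverNum
    · intro G hG1 hG2
      rw [hpull] at hG1
      classical
      have hwex : ∀ V, V ∈ G → ∃ W, W ∈ iterJoin S 𝒰 n ∧ φ ⁻¹' W = V := by
        intro V hV
        obtain ⟨W, hWm, hWe⟩ := hG1 hV
        exact ⟨W, hWm, hWe⟩
      choose! w hw1 hw2 using hwex
      refine ⟨G.image w, ?_, ?_, Finset.card_image_le⟩
      · intro W hW
        simp only [Finset.coe_image, Set.mem_image] at hW
        obtain ⟨V, hV, rfl⟩ := hW
        exact hw1 V hV
      · apply eq_univ_of_forall
        intro y
        obtain ⟨x, rfl⟩ := hφs y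
        have hx : x ∈ ⋃₀ (↑G : Set (Set X)) := by rw [hG2]; trivial
        obtain ⟨V, hVG, hxV⟩ := hx
        refine ⟨w V, by simp only [Finset.coe_image, Set.mem_image]; exact ⟨V, hVG, rfl⟩, ?_⟩
        have := hw2 V hVG
        rw [← this] at hxV
        exact hxV
    · exact exists_finite_subcover (isOpenCover_iterJoin hT (isOpenCover_pullCover hφ h𝒰) n)
  · -- from subcovers on Y side produce subcovers on X side
    apply le_coverNum
    · intro F hF1 hF2
      classical
      refine ⟨F.image (fun U => φ ⁻¹' U), ?_, ?_, Finset.card_image_le⟩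
      · intro V hV
        simp only [Finset.coe_image, Set.mem_image] at hV
        obtain ⟨U, hU, rfl⟩ := hV
        rw [hpull]
        exact ⟨U, hF1 hU, rfl⟩
      · apply eq_univ_of_forall
        intro x
        have : φ x ∈ ⋃₀ (↑F : Set (Set Y)) := by rw [hF2]; trivial
        obtain ⟨U, hUF, hxU⟩ := this
        exact ⟨φ ⁻¹' U, by simp only [Finset.coe_image, Set.mem_image]; exact ⟨U, hUF, rfl⟩, hxU⟩
    · exact exists_finite_subcover (isOpenCover_iterJoin hS h𝒰 n)

lemma entropy_le_of_semiconj [CompactSpace X] [CompactSpace Y] {φ : X → Y}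
    (hφ : Continuous φ) (hφs : Function.Surjective φ) {T : X → X} {S : Y → Y}
    (hT : Continuous T) (hS : Continuous S) (hconj : ∀ x, φ (T x) = S (φ x)) :
    entropy S ≤ entropy T := by
  apply iSup₂_le
  intro 𝒰 h𝒰
  have key : coverEntropy S 𝒰 = coverEntropy T (pullCover φ 𝒰) := by
    unfold coverEntropy
    congr 1
    funext n
    rw [coverNum_iterJoin_pull hφ hφs hT hS hconj h𝒰 n]
  rw [key]
  exact le_iSup₂_of_le (pullCover φ 𝒰) (isOpenCover_pullCover hφ h𝒰) le_rfl

lemma entropy_eq_of_conj [CompactSpace X] [CompactSpace Y] {φ : X → Y} {ψ : Y → X}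
    (hφ : Continuous φ) (hψ : Continuous ψ)
    (hψφ : ∀ x, ψ (φ x) = x) (hφψ : ∀ y, φ (ψ y) = y) {T : X → X} {S : Y → Y}
    (hT : Continuous T) (hS : Continuous S) (hconj : ∀ x, φ (T x) = S (φ x)) :
    entropy T = entropy S := by
  have hconj' : ∀ y, ψ (S y) = T (ψ y) := by
    intro y
    conv_lhs => rw [← hφψ y, ← hconj, hψφ]
  refine le_antisymm ?_ ?_
  · exact entropy_le_of_semiconj hψ (fun x => ⟨φ x, hψφ x⟩) hS hT hconj'
  · exact entropy_le_of_semiconj hφ (fun y => ⟨ψ y, hφψ y⟩) hT hS hconj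

lemma continuous_shiftOn_s8 (h : ℕ → X) : Continuous (shiftOn h) := by
  apply Continuous.subtype_mk
  apply continuous_pi
  intro k
  exact (continuous_apply (k + 1)).comp continuous_subtype_val

end Aux

section Cplx

lemma norm_le_of_mem_orbitClosure {h : ℕ → ℂ} {ε : ℝ} (hε : ∀ n, ε ≤ ‖h n‖)
    {ω : ℕ → ℂ} (hω : ω ∈ orbitClosure h) (k : ℕ) : ε ≤ ‖ω k‖ := by
  have hcl : IsClosed {ω : ℕ → ℂ | ∀ k, ε ≤ ‖ω k‖} := by
    have : {ω : ℕ → ℂ | ∀ k, ε ≤ ‖ω k‖} =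
        ⋂ k, (fun ω : ℕ → ℂ => ω k) ⁻¹' {z : ℂ | ε ≤ ‖z‖} := by
      ext ω; simp [Set.mem_iInter]
    rw [this]
    exact isClosed_iInter fun k =>
      (isClosed_le continuous_const continuous_norm).preimage (continuous_apply k)
  have hsub : orbitSet h ⊆ {ω : ℕ → ℂ | ∀ k, ε ≤ ‖ω k‖} := by
    rintro ω ⟨n, hn⟩ k
    rw [hn k]; exact hε _
  exact closure_minimal hsub hcl hω k

lemma continuousOn_invMap {h : ℕ → ℂ} {ε : ℝ} (hε : 0 < ε) (hlow : ∀ n, ε ≤ ‖h n‖) :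
    ContinuousOn (fun ω : ℕ → ℂ => fun k => (ω k)⁻¹) (orbitClosure h) := by
  intro x hx
  apply ContinuousAt.continuousWithinAt
  apply continuousAt_pi.2
  intro k
  have hxk : x k ≠ 0 := by
    intro h0
    have := norm_le_of_mem_orbitClosure hlow hx k
    rw [h0] at this
    simp at this
    linarith
  exact ContinuousAt.comp (continuousAt_inv₀ hxk) (continuous_apply k).continuousAt

lemma mem_orbitClosure_inv {h : ℕ → ℂ} {ε : ℝ} (hε : 0 < ε) (hlow : ∀ n, ε ≤ ‖h n‖)
    {ω : ℕ → ℂ} (hω : ω ∈ orbitClosure h) :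
    (fun k => (ω k)⁻¹) ∈ orbitClosure (fun n => (h n)⁻¹) := by
  have himg : (fun ω : ℕ → ℂ => fun k => (ω k)⁻¹) '' orbitSet h ⊆
      orbitSet (fun n => (h n)⁻¹) := by
    rintro _ ⟨ω, ⟨n, hn⟩, rfl⟩
    exact ⟨n, fun k => by simp [hn k]⟩
  have hkey := (continuousOn_invMap hε hlow).image_closure
  have : (fun ω : ℕ → ℂ => fun k => (ω k)⁻¹) ω ∈
      (fun ω : ℕ → ℂ => fun k => (ω k)⁻¹) '' closure (orbitSet h) :=
    Set.mem_image_of_mem _ hω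
  have h2 := hkey this
  exact closure_mono himg h2

lemma compactSpace_orbitClosure {h : ℕ → ℂ} {M : ℝ} (hM : ∀ n, ‖h n‖ ≤ M) :
    CompactSpace (orbitClosure h) := by
  rw [← isCompact_iff_compactSpace]
  apply IsCompact.of_isClosed_subset
    (isCompact_univ_pi fun _ : ℕ => isCompact_closedBall (0 : ℂ) M) isClosed_closure
  apply closure_minimal ?_ (isClosed_set_pi fun i _ => Metric.isClosed_closedBall)
  rintro ω ⟨n, hn⟩ k _
  simp only [Metric.mem_closedBall, dist_zero_right, hn k]
  exact hM _

end Cplx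

end Anqie

/-- If `c > 0` and `f : ℕ → ℂ` is bounded with `|f(n)| > c` for
all `n`, then the pointwise reciprocal `1/f` is bounded and `AE(1/f) = AE(f)`. -/
theorem anqie_entropy_inv (c : ℝ) (hc : 0 < c) (f : ℕ → ℂ)
    (hf : ∃ M : ℝ, ∀ n, ‖f n‖ ≤ M) (hlow : ∀ n, c < ‖f n‖) :
    (∃ M : ℝ, ∀ n, ‖(f n)⁻¹‖ ≤ M) ∧ Anqie.AE (fun n => (f n)⁻¹) = Anqie.AE f := by
  obtain ⟨M, hM⟩ := hf
  have hM0 : 0 < M := lt_of_lt_of_le (lt_trans hc (hlow 0)) (hM 0)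
  set g : ℕ → ℂ := fun n => (f n)⁻¹ with hg
  have hglow : ∀ n, M⁻¹ ≤ ‖g n‖ := by
    intro n
    rw [hg]
    simp only [norm_inv]
    exact inv_anti₀ (lt_trans hc (hlow n)) (hM n)
  have hgup : ∀ n, ‖g n‖ ≤ c⁻¹ := by
    intro n
    rw [hg]
    simp only [norm_inv]
    exact inv_anti₀ hc (hlow n).le
  have hflow : ∀ n, c ≤ ‖f n‖ := fun n => (hlow n).le
  have hgg : (fun n => (g n)⁻¹) = f := funext fun n => inv_inv _
  refine ⟨⟨c⁻¹, hgup⟩, ?_⟩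
  haveI : CompactSpace (Anqie.orbitClosure f) := Anqie.compactSpace_orbitClosure hM
  haveI : CompactSpace (Anqie.orbitClosure g) := Anqie.compactSpace_orbitClosure hgup
  -- the conjugating homeomorphism: pointwise inversion
  set φ : Anqie.orbitClosure f → Anqie.orbitClosure g := fun ω =>
    ⟨fun k => ((ω : ℕ → ℂ) k)⁻¹, Anqie.mem_orbitClosure_inv hc hflow ω.2⟩ with hφdef
  set ψ : Anqie.orbitClosure g → Anqie.orbitClosure f := fun ω =>
    ⟨fun k => ((ω : ℕ → ℂ) k)⁻¹, by
      have := Anqie.mem_orbitClosure_inv (inv_pos.2 hM0) hglow ω.2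
      rwa [hgg] at this⟩ with hψdef
  have hφc : Continuous φ :=
    Continuous.subtype_mk
      ((Anqie.continuousOn_invMap hc hflow).restrict.congr fun ω => rfl) _
  have hψc : Continuous ψ :=
    Continuous.subtype_mk
      ((Anqie.continuousOn_invMap (inv_pos.2 hM0) hglow).restrict.congr fun ω => rfl) _
  have hψφ : ∀ ω, ψ (φ ω) = ω := fun ω => Subtype.ext (funext fun k => inv_inv _)
  have hφψ : ∀ ω, φ (ψ ω) = ω := fun ω => Subtype.ext (funext fun k => inv_inv _)
  have hconj : ∀ ω, φ (Anqie.shiftOn f ω) = Anqie.shiftOn g (φ ω) := fun ω => rfl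
  exact (Anqie.entropy_eq_of_conj hφc hψc hψφ hφψ (Anqie.continuous_shiftOn_s8 f)
    (Anqie.continuous_shiftOn_s8 g) hconj).symm
end
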